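/- Let A be a ⊖-algebra and let x, w₁, w₂ be prime ideals of A with (x, w₁) ∈ dom(+) and (x, w₂) ∈ dom(+). Then there exists a prime ideal w₀ of A such that (x, w₀) ∈ dom(+), w₁ ⊆ w₀, w₂ ⊆ w₀, and either x + w₀ = x + w₁ or x + w₀ = x + w₂. -/
import Mathlib


class OminusAlgebra (A : Type*) extends DistribLattice A, BoundedOrder A where
  ominus : A → A → A
  inf_ominus : ∀ a b c : A, ominus (a ⊓ b) c = ominus a c ⊓ ominus b c
  sup_ominus : ∀ a b c : A, ominus (a ⊔ b) c = ominus a c ⊔ ominus b c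
  ominus_inf : ∀ a b c : A, ominus a (b ⊓ c) = ominus a b ⊔ ominus a c
  ominus_sup : ∀ a b c : A, ominus a (b ⊔ c) = ominus a b ⊓ ominus a c
  bot_ominus : ∀ a : A, ominus ⊥ a = ⊥
  ominus_top : ∀ a : A, ominus a ⊤ = ⊥
  ominus_bot : ∀ a : A, ominus a ⊥ = a

infixl:65 " ⊖ " => OminusAlgebra.ominus

variable {A : Type*} [OminusAlgebra A]

def oneg (a : A) : A := ⊤ ⊖ a

def oplus (a b : A) : A := oneg (oneg a ⊖ b)

def IsPrimeIdeal (x : Set A) : Prop :=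
  x.Nonempty ∧ (∀ a b : A, a ≤ b → b ∈ x → a ∈ x) ∧
    (∀ a b : A, a ∈ x → b ∈ x → a ⊔ b ∈ x) ∧ x ≠ Set.univ ∧
    (∀ a b : A, a ⊓ b ∈ x → a ∈ x ∨ b ∈ x)

def ineg (x : Set A) : Set A := {a | oneg a ∉ x}

def domPlus (x y : Set A) : Prop := y ⊆ ineg x

def pplus (x y : Set A) : Set A := {a | ∃ b ∈ y, a ⊖ b ∈ x}

def domStar (x y : Set A) : Prop := ¬ ineg x ⊆ y

def pstar (x y : Set A) : Set A := {a | ∀ b ∉ y, a ⊖ b ∈ x}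

theorem stmt7 {A : Type*} [OminusAlgebra A] (x w₁ w₂ : Set A)
    (hx : IsPrimeIdeal x) (hw₁ : IsPrimeIdeal w₁) (hw₂ : IsPrimeIdeal w₂)
    (h₁ : domPlus x w₁) (h₂ : domPlus x w₂) :
    ∃ w₀ : Set A, IsPrimeIdeal w₀ ∧ domPlus x w₀ ∧ w₁ ⊆ w₀ ∧ w₂ ⊆ w₀ ∧
      (pplus x w₀ = pplus x w₁ ∨ pplus x w₀ = pplus x w₂) := by
  obtain ⟨hxne, hxdc, hxjc, hxproper, hxpr⟩ := hx
  obtain ⟨a₀, ha₀⟩ := hxne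
  have hbot : (⊥ : A) ∈ x := hxdc ⊥ a₀ bot_le ha₀
  -- monotone in first argument
  have mono1 : ∀ a a' b : A, a ≤ a' → a ⊖ b ≤ a' ⊖ b := by
    intro a a' b h
    have h1 := OminusAlgebra.sup_ominus a a' b
    rw [sup_eq_right.mpr h] at h1
    rw [h1]; exact le_sup_left
  -- antitone in second argument
  have anti2 : ∀ a b b' : A, b ≤ b' → a ⊖ b' ≤ a ⊖ b := by
    intro a b b' h
    have h1 := OminusAlgebra.ominus_sup a b b'
    rw [sup_eq_right.mpr h] at h1
    rw [h1]; exact inf_le_left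
  have hle : ∀ a b : A, a ⊖ b ≤ a := by
    intro a b
    have := anti2 a ⊥ b bot_le
    rwa [OminusAlgebra.ominus_bot] at this
  set z₁ := pplus x w₁ with hz₁
  set z₂ := pplus x w₂ with hz₂
  -- pplus is downward closed
  have hzdc : ∀ (w : Set A) (u' u : A), u' ≤ u → u ∈ pplus x w → u' ∈ pplus x w := by
    rintro w u' u h ⟨b, hb, hub⟩
    exact ⟨b, hb, hxdc _ _ (mono1 u' u b h) hub⟩
  -- pplus is meet-prime
  have hzpr : ∀ (w : Set A) (u v : A), u ⊓ v ∈ pplus x w → u ∈ pplus x w ∨ v ∈ pplus x w := by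
    rintro w u v ⟨b, hb, huv⟩
    rw [OminusAlgebra.inf_ominus] at huv
    rcases hxpr _ _ huv with h | h
    · exact Or.inl ⟨b, hb, h⟩
    · exact Or.inr ⟨b, hb, h⟩
  -- x ⊆ pplus x w for nonempty w
  have hxsub : ∀ (w : Set A), w.Nonempty → x ⊆ pplus x w := by
    rintro w ⟨b, hb⟩ a ha
    exact ⟨b, hb, hxdc _ _ (hle a b) ha⟩
  -- ⊤ is not in pplus x w when domPlus x w
  have htop : ∀ (w : Set A), domPlus x w → ⊤ ∉ pplus x w := by
    rintro w hd ⟨b, hb, hub⟩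
    exact hd hb hub
  have htop1 : (⊤ : A) ∉ z₁ := htop w₁ h₁
  have htop2 : (⊤ : A) ∉ z₂ := htop w₂ h₂
  -- the candidate
  set S : Set A := {b : A | ∀ a : A, a ∉ z₁ → a ∉ z₂ → a ⊖ b ∉ x} with hS
  have hbotS : (⊥ : A) ∈ S := by
    intro a ha1 _
    rw [OminusAlgebra.ominus_bot]
    intro hax
    exact ha1 (hxsub w₁ hw₁.1 hax)
  have htopS : (⊤ : A) ∉ S := by
    intro h
    have := h ⊤ htop1 htop2
    rw [OminusAlgebra.ominus_top] at this
    exact this hbot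
  have hSdc : ∀ a b : A, a ≤ b → b ∈ S → a ∈ S := by
    intro b' b h hbS a ha1 ha2 hax
    exact hbS a ha1 ha2 (hxdc _ _ (anti2 a b' b h) hax)
  have hSjc : ∀ a b : A, a ∈ S → b ∈ S → a ⊔ b ∈ S := by
    intro b b' hbS hb'S a ha1 ha2 hax
    rw [OminusAlgebra.ominus_sup] at hax
    rcases hxpr _ _ hax with h | h
    · exact hbS a ha1 ha2 h
    · exact hb'S a ha1 ha2 h
  have hSpr : ∀ b b' : A, b ⊓ b' ∈ S → b ∈ S ∨ b' ∈ S := by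
    intro b b' hbb'
    by_contra h
    push_neg at h
    obtain ⟨hbS, hb'S⟩ := h
    simp only [hS, Set.mem_setOf_eq, not_forall] at hbS hb'S
    obtain ⟨a, ha1, ha2, hax⟩ := hbS
    obtain ⟨a', ha1', ha2', hax'⟩ := hb'S
    push_neg at hax hax'
    have haa1 : a ⊓ a' ∉ z₁ := by
      intro h; rcases hzpr w₁ a a' h with h | h
      · exact ha1 h
      · exact ha1' h
    have haa2 : a ⊓ a' ∉ z₂ := by
      intro h; rcases hzpr w₂ a a' h with h | h
      · exact ha2 h
      · exact ha2' h
    apply hbb' (a ⊓ a') haa1 haa2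
    rw [OminusAlgebra.ominus_inf]
    exact hxjc _ _ (hxdc _ _ (mono1 (a ⊓ a') a b inf_le_left) hax)
      (hxdc _ _ (mono1 (a ⊓ a') a' b' inf_le_right) hax')
  have hSprime : IsPrimeIdeal S := by
    refine ⟨⟨⊥, hbotS⟩, hSdc, hSjc, ?_, hSpr⟩
    intro h
    exact htopS (h ▸ Set.mem_univ ⊤)
  have hw₁S : w₁ ⊆ S := by
    intro b hb a ha1 _ hax
    exact ha1 ⟨b, hb, hax⟩
  have hw₂S : w₂ ⊆ S := by
    intro b hb a _ ha2 hax
    exact ha2 ⟨b, hb, hax⟩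
  have hdomS : domPlus x S := by
    intro b hbS
    exact hbS ⊤ htop1 htop2
  have hmono : ∀ (w w' : Set A), w ⊆ w' → pplus x w ⊆ pplus x w' := by
    rintro w w' hww' a ⟨b, hb, hab⟩
    exact ⟨b, hww' hb, hab⟩
  have hsub12 : pplus x S ⊆ z₁ ∪ z₂ := by
    rintro a ⟨b, hbS, hab⟩
    by_contra h
    exact hbS a (fun h1 => h (Or.inl h1)) (fun h2 => h (Or.inr h2)) hab
  refine ⟨S, hSprime, hdomS, hw₁S, hw₂S, ?_⟩
  by_cases hc : pplus x S ⊆ z₁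
  · exact Or.inl (Set.Subset.antisymm hc (hmono w₁ S hw₁S))
  · refine Or.inr (Set.Subset.antisymm ?_ (hmono w₂ S hw₂S))
    rw [Set.not_subset] at hc
    obtain ⟨u, huS, hu1⟩ := hc
    have hu2 : u ∈ z₂ := (hsub12 huS).resolve_left hu1
    intro v hvS
    rcases hsub12 hvS with hv1 | hv2
    · -- v ∈ z₁; show u ⊔ v ∈ pplus x S and derive v ∈ z₂
      obtain ⟨b, hbS, hub⟩ := huS
      obtain ⟨b', hb'S, hvb'⟩ := hvS
      have hjoin : u ⊔ v ∈ pplus x S := by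
        refine ⟨b ⊔ b', hSjc b b' hbS hb'S, ?_⟩
        have hcalc : (u ⊔ v) ⊖ (b ⊔ b') ≤ (u ⊖ b) ⊔ (v ⊖ b') := by
          rw [OminusAlgebra.sup_ominus, OminusAlgebra.ominus_sup,
            OminusAlgebra.ominus_sup]
          exact sup_le_sup inf_le_left inf_le_right
        exact hxdc _ _ hcalc (hxjc _ _ hub hvb')
      rcases hsub12 hjoin with h | h
      · exact absurd (hzdc w₁ u (u ⊔ v) le_sup_left h) hu1
      · exact hzdc w₂ v (u ⊔ v) le_sup_right h
    · exact hv2
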